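/- With R = Σ_{i=1}^r σᵢ uᵢvᵢᵀ and N = Σ_{j=1}^k σ_{r+j} u_{r+j} v_{r+j}ᵀ (with (uᵢ), (vᵢ) orthonormal families and all σᵢ > 0 as above), for each 1 ≤ i ≤ r and 1 ≤ j ≤ k the vectors Φ_{i,r+j}^± = (1/√2)(u_{r+j} vᵢᵀ ± uᵢ v_{r+j}ᵀ) are eigenvectors of the Weingarten map L_R(N) with eigenvalues ± σ_{r+j}/σᵢ. -/

import Mathlib

/-!
Orthonormality kills all but one sandwich term of the double sum defining `L_R(N)`, so `L_R(N)`
exchanges `u_{r+j} vᵢᵀ` and `uᵢ v_{r+j}ᵀ` up to the factor `σ_{r+j}/σᵢ`. Their sum and difference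
are therefore eigenvectors with eigenvalues `± σ_{r+j}/σᵢ`.
-/

open Matrix

theorem vecMulVec_mul_transpose_vecMulVec_mul_vecMulVec {α : Type*} [CommSemiring α]
    {l m n p : Type*} [Fintype m] [Fintype n] (a : l → α) (b d : m → α) (c e : n → α)
    (f : p → α) :
    vecMulVec a b * (vecMulVec c d)ᵀ * vecMulVec e f = ((b ⬝ᵥ d) * (c ⬝ᵥ e)) • vecMulVec a f := by
  rw [transpose_vecMulVec, vecMulVec_mul_vecMulVec, vecMulVec_mul_vecMulVec, vecMulVec_smul,
    smul_dotProduct, smul_eq_mul]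

section Orthonormal

variable {ι l m : Type*} [Fintype l] [Fintype m] [DecidableEq ι]
  {u : ι → l → ℝ} {v : ι → m → ℝ}

theorem vecMulVec_mul_transpose_vecMulVec_mul_vecMulVec_of_orthonormal
    (hu : ∀ i j, u i ⬝ᵥ u j = if i = j then 1 else 0)
    (hv : ∀ i j, v i ⬝ᵥ v j = if i = j then 1 else 0) (p q s t : ι) :
    vecMulVec (u p) (v p) * (vecMulVec (u s) (v t))ᵀ * vecMulVec (u q) (v q) =
      if p = t ∧ s = q then vecMulVec (u p) (v q) else 0 := by
  rw [vecMulVec_mul_transpose_vecMulVec_mul_vecMulVec, hu, hv]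
  split_ifs <;> simp_all

end Orthonormal

theorem Fin.castAdd_ne_natAdd {r k : ℕ} (i : Fin r) (j : Fin k) :
    Fin.castAdd k i ≠ Fin.natAdd r j := by
  simp [Fin.ext_iff]
  omega

section Weingarten

variable {l m r k : ℕ} (u : Fin (r + k) → Fin l → ℝ) (v : Fin (r + k) → Fin m → ℝ)
  (σ : Fin (r + k) → ℝ)

noncomputable def weingartenMap : Matrix (Fin l) (Fin m) ℝ →ₗ[ℝ] Matrix (Fin l) (Fin m) ℝ where
  toFun X := ∑ i : Fin r, ∑ j : Fin k,
        (σ (Fin.natAdd r j) / σ (Fin.castAdd k i)) •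
          (vecMulVec (u (Fin.castAdd k i)) (v (Fin.castAdd k i)) * Xᵀ *
              vecMulVec (u (Fin.natAdd r j)) (v (Fin.natAdd r j)) +
            vecMulVec (u (Fin.natAdd r j)) (v (Fin.natAdd r j)) * Xᵀ *
              vecMulVec (u (Fin.castAdd k i)) (v (Fin.castAdd k i)))
  map_add' X Y := by
    simp only [transpose_add, Matrix.mul_add, Matrix.add_mul, ← Finset.sum_add_distrib, smul_add]
    exact Finset.sum_congr rfl fun _ _ => Finset.sum_congr rfl fun _ _ => by abel
  map_smul' c X := by
    simp only [transpose_smul, Matrix.mul_smul, Matrix.smul_mul, ← smul_add, Finset.smul_sum,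
      smul_comm c, RingHom.id_apply]

variable {u v}
variable (hu : ∀ i j, u i ⬝ᵥ u j = if i = j then 1 else 0)
    (hv : ∀ i j, v i ⬝ᵥ v j = if i = j then 1 else 0)
include hu hv

theorem weingartenMap_vecMulVec_natAdd_castAdd (i : Fin r) (j : Fin k) :
    weingartenMap u v σ (vecMulVec (u (Fin.natAdd r j)) (v (Fin.castAdd k i))) =
      (σ (Fin.natAdd r j) / σ (Fin.castAdd k i)) •
        vecMulVec (u (Fin.castAdd k i)) (v (Fin.natAdd r j)) := by
  simp only [weingartenMap, LinearMap.coe_mk, AddHom.coe_mk,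
    vecMulVec_mul_transpose_vecMulVec_mul_vecMulVec_of_orthonormal hu hv]
  simp [(Fin.castAdd_ne_natAdd _ _).symm, ite_and]

theorem weingartenMap_vecMulVec_castAdd_natAdd (i : Fin r) (j : Fin k) :
    weingartenMap u v σ (vecMulVec (u (Fin.castAdd k i)) (v (Fin.natAdd r j))) =
      (σ (Fin.natAdd r j) / σ (Fin.castAdd k i)) •
        vecMulVec (u (Fin.natAdd r j)) (v (Fin.castAdd k i)) := by
  simp only [weingartenMap, LinearMap.coe_mk, AddHom.coe_mk,
    vecMulVec_mul_transpose_vecMulVec_mul_vecMulVec_of_orthonormal hu hv]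
  simp [Fin.castAdd_ne_natAdd, ite_and]

end Weingarten

theorem weingarten_map_eigenvectors_general
    (l m r k : ℕ)
    (u : Fin (r + k) → Fin l → ℝ) (v : Fin (r + k) → Fin m → ℝ) (σ : Fin (r + k) → ℝ)
    (hu : ∀ i j, dotProduct (u i) (u j) = if i = j then 1 else 0)
    (hv : ∀ i j, dotProduct (v i) (v j) = if i = j then 1 else 0) :
    let L : Matrix (Fin l) (Fin m) ℝ → Matrix (Fin l) (Fin m) ℝ := fun X =>
      ∑ i : Fin r, ∑ j : Fin k,
        (σ (Fin.natAdd r j) / σ (Fin.castAdd k i)) •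
          (vecMulVec (u (Fin.castAdd k i)) (v (Fin.castAdd k i)) * Xᵀ *
              vecMulVec (u (Fin.natAdd r j)) (v (Fin.natAdd r j)) +
            vecMulVec (u (Fin.natAdd r j)) (v (Fin.natAdd r j)) * Xᵀ *
              vecMulVec (u (Fin.castAdd k i)) (v (Fin.castAdd k i)))
    ∀ (i : Fin r) (j : Fin k),
      let Φp : Matrix (Fin l) (Fin m) ℝ := (1 / Real.sqrt 2) •
        (vecMulVec (u (Fin.natAdd r j)) (v (Fin.castAdd k i)) +
          vecMulVec (u (Fin.castAdd k i)) (v (Fin.natAdd r j)))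
      let Φm : Matrix (Fin l) (Fin m) ℝ := (1 / Real.sqrt 2) •
        (vecMulVec (u (Fin.natAdd r j)) (v (Fin.castAdd k i)) -
          vecMulVec (u (Fin.castAdd k i)) (v (Fin.natAdd r j)))
      L Φp = (σ (Fin.natAdd r j) / σ (Fin.castAdd k i)) • Φp ∧
      L Φm = -((σ (Fin.natAdd r j) / σ (Fin.castAdd k i))) • Φm := by
  intro L i j Φp Φm
  change weingartenMap u v σ Φp = _ ∧ weingartenMap u v σ Φm = _
  simp only [Φp, Φm, map_smul, map_add, map_sub, weingartenMap_vecMulVec_natAdd_castAdd σ hu hv,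
    weingartenMap_vecMulVec_castAdd_natAdd σ hu hv]
  constructor <;> module

/-- The vectors `Φ_{i,r+j}^± = (1/√2)(u_{r+j}vᵢᵀ ± uᵢv_{r+j}ᵀ)` are eigenvectors of the
Weingarten map `L_R(N)` with eigenvalues `± σ_{r+j}/σᵢ`. -/
theorem weingarten_map_eigenvectors
    (l m r k : ℕ)
    (u : Fin (r + k) → Fin l → ℝ) (v : Fin (r + k) → Fin m → ℝ) (σ : Fin (r + k) → ℝ)
    (hu : ∀ i j, dotProduct (u i) (u j) = if i = j then 1 else 0)
    (hv : ∀ i j, dotProduct (v i) (v j) = if i = j then 1 else 0)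
    (hσ : ∀ i, 0 < σ i)
    (R N : Matrix (Fin l) (Fin m) ℝ)
    (hR : R = ∑ i : Fin r,
      σ (Fin.castAdd k i) • vecMulVec (u (Fin.castAdd k i)) (v (Fin.castAdd k i)))
    (hN : N = ∑ j : Fin k,
      σ (Fin.natAdd r j) • vecMulVec (u (Fin.natAdd r j)) (v (Fin.natAdd r j))) :
    let L : Matrix (Fin l) (Fin m) ℝ → Matrix (Fin l) (Fin m) ℝ := fun X =>
      ∑ i : Fin r, ∑ j : Fin k,
        (σ (Fin.natAdd r j) / σ (Fin.castAdd k i)) •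
          (vecMulVec (u (Fin.castAdd k i)) (v (Fin.castAdd k i)) * Xᵀ *
              vecMulVec (u (Fin.natAdd r j)) (v (Fin.natAdd r j)) +
            vecMulVec (u (Fin.natAdd r j)) (v (Fin.natAdd r j)) * Xᵀ *
              vecMulVec (u (Fin.castAdd k i)) (v (Fin.castAdd k i)))
    ∀ (i : Fin r) (j : Fin k),
      let Φp : Matrix (Fin l) (Fin m) ℝ := (1 / Real.sqrt 2) •
        (vecMulVec (u (Fin.natAdd r j)) (v (Fin.castAdd k i)) +
          vecMulVec (u (Fin.castAdd k i)) (v (Fin.natAdd r j)))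
      let Φm : Matrix (Fin l) (Fin m) ℝ := (1 / Real.sqrt 2) •
        (vecMulVec (u (Fin.natAdd r j)) (v (Fin.castAdd k i)) -
          vecMulVec (u (Fin.castAdd k i)) (v (Fin.natAdd r j)))
      L Φp = (σ (Fin.natAdd r j) / σ (Fin.castAdd k i)) • Φp ∧
      L Φm = -((σ (Fin.natAdd r j) / σ (Fin.castAdd k i))) • Φm :=
  weingarten_map_eigenvectors_general l m r k u v σ hu hv
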